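/- arXiv:2506.05974 — 3 statements merged into one kernel-verified Lean document; each statement's English description precedes it below -/
import Mathlib

section
/- Convergence rate of the proximal variable smoothing algorithm: Let X, Z be finite-dimensional real inner product spaces, φ ∈ Γ₀(X), h : X → ℝ differentiable with ∇h Lipschitz on dom φ, S : X → Z continuously differentiable, g : Z → ℝ Lipschitz with constant L_g > 0 and η-weakly convex, F := h + g∘S, and assume F + φ attains its minimum over X. Let c ∈ (0,1), x_1 ∈ dom φ, and let (μ_n) ⊂ (0, (2η)⁻¹] satisfy μ_n → 0, ∑_n μ_n = +∞, and M⁻¹ ≤ μ_{n+1}/μ_n ≤ 1 for all n for some M ≥ 1. Set F_n := h + g_{μ_n}∘S and assume ∇F_n is Lipschitz on dom φ with constant L_n := ϖ₁ + ϖ₂ μ_n⁻¹ for some ϖ₁ ≥ 0, ϖ₂ > 0. Suppose (γ_n) ⊂ ℝ with β L_n⁻¹ ≤ γ_n ≤ γ̄ for some β, γ̄ > 0, each γ_n satisfies the Armijo-type condition (F_n + φ)(prox_{γ_nφ}(x_n − γ_n ∇F_n(x_n))) ≤ (F_n + φ)(x_n) − c γ_n ‖(x_n − prox_{γ_nφ}(x_n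 − γ_n ∇F_n(x_n)))/γ_n‖², and x_{n+1} := prox_{γ_nφ}(x_n − γ_n ∇F_n(x_n)). Then there exists χ > 0 such that for all integers 1 ≤ k̲ ≤ k̄: min_{k̲ ≤ n ≤ k̄} ‖(x_n − prox_{γ̄φ}(x_n − γ̄ ∇F_n(x_n)))/γ̄‖ ≤ √(χ / ∑_{n=k̲}^{k̄} μ_n). -/
open Filter Topology Pointwise

noncomputable section

/-- The Fréchet (regular) subdifferential of an extended-real-valued function `J` at `x'`:
`v ∈ ∂_F J(x')` iff `x' ∈ dom J` and
`liminf_{x → x', x ≠ x'} (J x − J x' − ⟨v, x − x'⟩)/‖x − x'‖ ≥ 0`. -/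
def frechetSubdiff {X : Type*} [NormedAddCommGroup X] [InnerProductSpace ℝ X]
    (J : X → EReal) (x' : X) : Set X :=
  {v | J x' ≠ ⊤ ∧
    (0 : EReal) ≤ Filter.liminf
      (fun x => (J x - J x' - ((inner ℝ v (x - x') : ℝ) : EReal)) * ((‖x - x'‖⁻¹ : ℝ) : EReal))
      (𝓝[≠] x')}

/-- The limiting (general) subdifferential of `J` at `x'`. -/
def limitingSubdiff {X : Type*} [NormedAddCommGroup X] [InnerProductSpace ℝ X]
    (J : X → EReal) (x' : X) : Set X :=
  {v | ∃ xs vs : ℕ → X,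
      Tendsto xs atTop (𝓝 x') ∧
      Tendsto (fun n => J (xs n)) atTop (𝓝 (J x')) ∧
      (∀ n, vs n ∈ frechetSubdiff J (xs n)) ∧
      Tendsto vs atTop (𝓝 v)}

/-- The convex subdifferential of `φ` at `x'`. -/
def convexSubdiff {X : Type*} [NormedAddCommGroup X] [InnerProductSpace ℝ X]
    (φ : X → EReal) (x' : X) : Set X :=
  {v | ∀ x, φ x' + ((inner ℝ v (x - x') : ℝ) : EReal) ≤ φ x}

/-- `φ ∈ Γ₀(X)`: proper, lower semicontinuous, convex, with values in `ℝ ∪ {+∞}`. -/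
structure Gamma0 {X : Type*} [NormedAddCommGroup X] [InnerProductSpace ℝ X]
    (φ : X → EReal) : Prop where
  ne_bot : ∀ x, φ x ≠ ⊥
  proper : ∃ x, φ x ≠ ⊤
  lsc : LowerSemicontinuous φ
  cvx : ∀ x y : X, ∀ t : ℝ, 0 ≤ t → t ≤ 1 →
    φ (t • x + (1 - t) • y) ≤ (t : EReal) * φ x + ((1 - t : ℝ) : EReal) * φ y

/-- `p` is the unique minimizer of `x ↦ φ x + ‖x - y‖² / (2γ)`, i.e. `p = prox_{γφ}(y)`. -/
def IsProxPt {X : Type*} [NormedAddCommGroup X] [InnerProductSpace ℝ X]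
    (φ : X → EReal) (γ : ℝ) (y p : X) : Prop :=
  (∀ x : X, φ p + ((‖p - y‖ ^ 2 / (2 * γ) : ℝ) : EReal) ≤
      φ x + ((‖x - y‖ ^ 2 / (2 * γ) : ℝ) : EReal)) ∧
  ∀ q : X, (∀ x : X, φ q + ((‖q - y‖ ^ 2 / (2 * γ) : ℝ) : EReal) ≤
      φ x + ((‖x - y‖ ^ 2 / (2 * γ) : ℝ) : EReal)) → q = p

/-- Moreau envelope of `g` of index `μ`. -/
def moreauEnv {Z : Type*} [NormedAddCommGroup Z] [InnerProductSpace ℝ Z]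
    (g : Z → ℝ) (μ : ℝ) (z' : Z) : ℝ :=
  ⨅ z : Z, (g z + ‖z - z'‖ ^ 2 / (2 * μ))

/-- Gradient mapping-type stationarity measure
`M_γ^{F,φ}(x') = inf { ‖(x' − prox_{γφ}(x' − γ v))/γ‖ : v ∈ ∂_L F(x') }`. -/
def statM {X : Type*} [NormedAddCommGroup X] [InnerProductSpace ℝ X]
    (F : X → ℝ) (prox : ℝ → X → X) (γ : ℝ) (x' : X) : ℝ :=
  sInf ((fun v => ‖γ⁻¹ • (x' - prox γ (x' - γ • v))‖) ''
    limitingSubdiff (fun x => ((F x : ℝ) : EReal)) x')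

/-- Outer limit (Painlevé–Kuratowski upper limit) of a sequence of sets. -/
def outerLimit {X : Type*} [NormedAddCommGroup X] (E : ℕ → Set X) : Set X :=
  {v | ∃ k : ℕ → ℕ, StrictMono k ∧ ∃ vs : ℕ → X, (∀ l, vs l ∈ E (k l)) ∧
      Tendsto vs atTop (𝓝 v)}

/-- Armijo-type condition for the proximal gradient step with smooth part `J`,
nonsmooth part `φ`, parameter `c` and stepsize `γ` at the point `x'`. -/
def ArmijoCond {X : Type*} [NormedAddCommGroup X] [InnerProductSpace ℝ X] [CompleteSpace X]
    (φ : X → EReal) (prox : ℝ → X → X) (J : X → ℝ) (c γ : ℝ) (x' : X) : Prop :=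
  ((J (prox γ (x' - γ • gradient J x')) : ℝ) : EReal) + φ (prox γ (x' - γ • gradient J x')) ≤
    ((J x' : ℝ) : EReal) + φ x' -
      ((c * γ * ‖γ⁻¹ • (x' - prox γ (x' - γ • gradient J x'))‖ ^ 2 : ℝ) : EReal)


private lemma aux_t_pvs (K L : ℝ) (hL : 0 ≤ L) (h : ∀ t : ℝ, 0 < t → t ≤ 1 → 0 ≤ K + t * L) :
    0 ≤ K := by
  by_contra hK
  push_neg at hK
  have hLp : (0:ℝ) < 2 * (L + 1) := by linarith
  set t : ℝ := min 1 ((-K) / (2 * (L + 1))) with ht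
  have ht0 : 0 < t := lt_min one_pos (div_pos (by linarith) hLp)
  have ht1 : t ≤ 1 := min_le_left _ _
  have h2 : t ≤ (-K) / (2 * (L + 1)) := min_le_right _ _
  have h3 := h t ht0 ht1
  have h4 : t * L ≤ ((-K) / (2 * (L + 1))) * L := by
    apply mul_le_mul_of_nonneg_right h2 hL
  have h5 : ((-K) / (2 * (L + 1))) * L ≤ (-K) / 2 := by
    rw [div_mul_eq_mul_div, div_le_div_iff₀ hLp two_pos]
    nlinarith
  linarith

private lemma prox_ne_top_pvs {X : Type*} [NormedAddCommGroup X] [InnerProductSpace ℝ X]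
    {φ : X → EReal} (hφ : Gamma0 φ) {γ : ℝ} {y p : X}
    (hp : IsProxPt φ γ y p) : φ p ≠ ⊤ := by
  obtain ⟨x₀, hx₀⟩ := hφ.proper
  have h := hp.1 x₀
  intro hT
  rw [hT] at h
  have hne : φ x₀ + ((‖x₀ - y‖ ^ 2 / (2 * γ) : ℝ) : EReal) ≠ ⊤ := by
    rw [← EReal.coe_toReal hx₀ (hφ.ne_bot x₀), ← EReal.coe_add]
    exact EReal.coe_ne_top _
  have : (⊤ : EReal) + ((‖p - y‖ ^ 2 / (2 * γ) : ℝ) : EReal) = ⊤ := by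
    rw [EReal.top_add_iff_ne_bot]
    exact EReal.coe_ne_bot _
  rw [this] at h
  exact hne (top_le_iff.mp h)

private lemma prox_vi_pvs {X : Type*} [NormedAddCommGroup X] [InnerProductSpace ℝ X]
    {φ : X → EReal} (hφ : Gamma0 φ) {γ : ℝ} (hγ : 0 < γ) {y p : X}
    (hp : IsProxPt φ γ y p) {x : X} (hx : φ x ≠ ⊤) :
    (φ p).toReal + (inner ℝ (y - p) (x - p) : ℝ) / γ ≤ (φ x).toReal := by
  have hpT : φ p ≠ ⊤ := prox_ne_top_pvs hφ hp
  set r := (φ p).toReal with hr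
  set s := (φ x).toReal with hs
  have hφp : φ p = (r : EReal) := (EReal.coe_toReal hpT (hφ.ne_bot p)).symm
  have hφx : φ x = (s : EReal) := (EReal.coe_toReal hx (hφ.ne_bot x)).symm
  have key : ∀ t : ℝ, 0 < t → t ≤ 1 →
      0 ≤ (s - r - (inner ℝ (y - p) (x - p) : ℝ) / γ) + t * (‖x - p‖ ^ 2 / (2 * γ)) := by
    intro t ht0 ht1
    set xt := t • x + (1 - t) • p with hxt
    have hcvx := hφ.cvx x p t (le_of_lt ht0) ht1
    have h1 := hp.1 xt
    have hub : φ xt ≤ ((t * s + (1 - t) * r : ℝ) : EReal) := by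
      rw [EReal.coe_add, EReal.coe_mul, EReal.coe_mul, ← hφp, ← hφx]
      exact hcvx
    have h2 : ((r : EReal) + ((‖p - y‖ ^ 2 / (2 * γ) : ℝ) : EReal)) ≤
        ((t * s + (1 - t) * r : ℝ) : EReal) + ((‖xt - y‖ ^ 2 / (2 * γ) : ℝ) : EReal) := by
      calc ((r : EReal) + ((‖p - y‖ ^ 2 / (2 * γ) : ℝ) : EReal))
          = φ p + ((‖p - y‖ ^ 2 / (2 * γ) : ℝ) : EReal) := by rw [hφp]
        _ ≤ φ xt + ((‖xt - y‖ ^ 2 / (2 * γ) : ℝ) : EReal) := h1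
        _ ≤ ((t * s + (1 - t) * r : ℝ) : EReal) + ((‖xt - y‖ ^ 2 / (2 * γ) : ℝ) : EReal) :=
            add_le_add_left hub _
    rw [← EReal.coe_add, ← EReal.coe_add, EReal.coe_le_coe_iff] at h2
    have hexp : ‖xt - y‖ ^ 2 = t ^ 2 * ‖x - p‖ ^ 2 + 2 * t * (inner ℝ (x - p) (p - y) : ℝ)
        + ‖p - y‖ ^ 2 := by
      have : xt - y = t • (x - p) + (p - y) := by
        rw [hxt]; module
      rw [this, norm_add_sq_real, norm_smul, real_inner_smul_left]
      simp [abs_of_pos ht0]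
      ring
    rw [hexp] at h2
    have hinner : (inner ℝ (x - p) (p - y) : ℝ) = -(inner ℝ (y - p) (x - p) : ℝ) := by
      rw [real_inner_comm]
      rw [show p - y = -(y - p) by abel, inner_neg_left]
    rw [hinner, add_div, add_div] at h2
    have h3 : 0 ≤ t * (s - r) + (t ^ 2 * ‖x - p‖ ^ 2) / (2 * γ)
        + (2 * t * -(inner ℝ (y - p) (x - p) : ℝ)) / (2 * γ) := by linarith
    have h4 : 0 ≤ t * ((s - r - (inner ℝ (y - p) (x - p) : ℝ) / γ)
        + t * (‖x - p‖ ^ 2 / (2 * γ))) := by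
      have heq : t * ((s - r - (inner ℝ (y - p) (x - p) : ℝ) / γ)
          + t * (‖x - p‖ ^ 2 / (2 * γ)))
          = t * (s - r) + (t ^ 2 * ‖x - p‖ ^ 2) / (2 * γ)
          + (2 * t * -(inner ℝ (y - p) (x - p) : ℝ)) / (2 * γ) := by
        field_simp
        ring
      rw [heq]
      exact h3
    exact nonneg_of_mul_nonneg_right h4 ht0
  have := aux_t_pvs _ _ (by positivity) key
  linarith

private lemma prox_mono_pvs {X : Type*} [NormedAddCommGroup X] [InnerProductSpace ℝ X]
    {φ : X → EReal} (hφ : Gamma0 φ) {γ₁ γ₂ : ℝ} (h1 : 0 < γ₁) (h12 : γ₁ ≤ γ₂)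
    {x v p₁ p₂ : X}
    (hp1 : IsProxPt φ γ₁ (x - γ₁ • v) p₁) (hp2 : IsProxPt φ γ₂ (x - γ₂ • v) p₂) :
    ‖γ₂⁻¹ • (x - p₂)‖ ≤ ‖γ₁⁻¹ • (x - p₁)‖ := by
  have h2 : 0 < γ₂ := lt_of_lt_of_le h1 h12
  have hT1 := prox_ne_top_pvs hφ hp1
  have hT2 := prox_ne_top_pvs hφ hp2
  have vi1 := prox_vi_pvs hφ h1 hp1 hT2
  have vi2 := prox_vi_pvs hφ h2 hp2 hT1
  set w₁ := x - p₁ with hw₁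
  set w₂ := x - p₂ with hw₂
  set na := ‖w₁‖ with hna
  set nb := ‖w₂‖ with hnb
  set I := (inner ℝ w₁ w₂ : ℝ) with hI
  set V := (inner ℝ v w₁ : ℝ) - (inner ℝ v w₂ : ℝ) with hV
  have e1 : x - γ₁ • v - p₁ = w₁ - γ₁ • v := by rw [hw₁]; abel
  have e2 : p₂ - p₁ = w₁ - w₂ := by rw [hw₁, hw₂]; abel
  have e3 : x - γ₂ • v - p₂ = w₂ - γ₂ • v := by rw [hw₂]; abel
  have e4 : p₁ - p₂ = -(w₁ - w₂) := by rw [hw₁, hw₂]; abel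
  rw [e1, e2] at vi1
  rw [e3, e4] at vi2
  have c1 : (inner ℝ (w₁ - γ₁ • v) (w₁ - w₂) : ℝ) = na ^ 2 - I - γ₁ * V := by
    simp only [inner_sub_left, inner_sub_right, real_inner_smul_left,
      real_inner_self_eq_norm_sq, hV, hI]
    ring
  have c2 : (inner ℝ (w₂ - γ₂ • v) (-(w₁ - w₂)) : ℝ) = nb ^ 2 - I + γ₂ * V := by
    simp only [inner_neg_right, inner_sub_left, inner_sub_right, real_inner_smul_left,
      real_inner_self_eq_norm_sq, hV, hI]
    rw [real_inner_comm w₂ w₁]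
    ring
  rw [c1] at vi1
  rw [c2] at vi2
  set r₁ := (φ p₁).toReal
  set r₂ := (φ p₂).toReal
  have d1 : na ^ 2 - I - γ₁ * V ≤ (r₂ - r₁) * γ₁ :=
    (div_le_iff₀ h1).mp (by linarith)
  have d2 : nb ^ 2 - I + γ₂ * V ≤ (r₁ - r₂) * γ₂ :=
    (div_le_iff₀ h2).mp (by linarith)
  have key : γ₂ * (na ^ 2 - I - γ₁ * V) + γ₁ * (nb ^ 2 - I + γ₂ * V) ≤ 0 := by
    have k1 := mul_le_mul_of_nonneg_left d1 h2.le
    have k2 := mul_le_mul_of_nonneg_left d2 h1.le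
    nlinarith [k1, k2]
  have hIle : I ≤ na * nb := real_inner_le_norm w₁ w₂
  have hna0 : 0 ≤ na := norm_nonneg _
  have hnb0 : 0 ≤ nb := norm_nonneg _
  have main : γ₁ * nb ≤ γ₂ * na := by
    by_contra hcon
    push_neg at hcon
    rcases le_or_gt nb na with hba | hba
    · have q1 : γ₁ * nb ≤ γ₁ * na := mul_le_mul_of_nonneg_left hba h1.le
      have q2 : γ₁ * na ≤ γ₂ * na := mul_le_mul_of_nonneg_right h12 hna0
      linarith
    · have q1 : 0 < (nb - na) * (γ₁ * nb - γ₂ * na) :=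
        mul_pos (by linarith) (by linarith)
      have q2 : (γ₁ + γ₂) * I ≤ (γ₁ + γ₂) * (na * nb) :=
        mul_le_mul_of_nonneg_left hIle (by linarith)
      nlinarith [key, q1, q2]
  rw [norm_smul, norm_smul, Real.norm_eq_abs, Real.norm_eq_abs,
    abs_of_pos (inv_pos.mpr h1), abs_of_pos (inv_pos.mpr h2),
    inv_mul_eq_div, inv_mul_eq_div, div_le_div_iff₀ h2 h1]
  linarith

private lemma moreau_min_pvs {Z : Type*} [NormedAddCommGroup Z] [InnerProductSpace ℝ Z]
    [FiniteDimensional ℝ Z]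
    {g : Z → ℝ} {Lg : ℝ} (hLg : 0 < Lg)
    (hgLip : ∀ z₁ z₂ : Z, |g z₁ - g z₂| ≤ Lg * ‖z₁ - z₂‖)
    {μ : ℝ} (hμ : 0 < μ) (z : Z) :
    ∃ w : Z, ‖w - z‖ ≤ 2 * μ * Lg ∧
      (∀ u : Z, g w + ‖w - z‖ ^ 2 / (2 * μ) ≤ g u + ‖u - z‖ ^ 2 / (2 * μ)) ∧
      moreauEnv g μ z = g w + ‖w - z‖ ^ 2 / (2 * μ) := by
  have hgc : Continuous g := by
    have : LipschitzWith (Real.toNNReal Lg) g := by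
      apply LipschitzWith.of_dist_le_mul
      intro a b
      rw [Real.dist_eq, dist_eq_norm, Real.coe_toNNReal _ hLg.le]
      exact hgLip a b
    exact this.continuous
  have hcont : Continuous (fun u : Z => g u + ‖u - z‖ ^ 2 / (2 * μ)) := by
    fun_prop
  set R := 2 * μ * Lg with hR
  have hR0 : 0 ≤ R := by positivity
  obtain ⟨w, hwmem, hwmin⟩ := (isCompact_closedBall z R).exists_isMinOn
    ⟨z, Metric.mem_closedBall_self hR0⟩ hcont.continuousOn
  have hwz : ‖w - z‖ ≤ R := by
    have := Metric.mem_closedBall.mp hwmem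
    rwa [dist_eq_norm] at this
  have hglob : ∀ u : Z, g w + ‖w - z‖ ^ 2 / (2 * μ) ≤ g u + ‖u - z‖ ^ 2 / (2 * μ) := by
    intro u
    by_cases hu : u ∈ Metric.closedBall z R
    · exact hwmin hu
    · have hd : R < ‖u - z‖ := by
        rw [Metric.mem_closedBall, dist_eq_norm] at hu
        linarith [not_le.mp hu]
      have hz : g w + ‖w - z‖ ^ 2 / (2 * μ) ≤ g z := by
        have := hwmin (Metric.mem_closedBall_self hR0)
        simpa using this
      have hgu : g z - g u ≤ Lg * ‖u - z‖ := by
        have := hgLip z u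
        rw [norm_sub_rev] at this
        exact (abs_le.mp this).2.trans_eq rfl
      have : g z ≤ g u + ‖u - z‖ ^ 2 / (2 * μ) := by
        have h1 : Lg * ‖u - z‖ ≤ ‖u - z‖ ^ 2 / (2 * μ) := by
          rw [le_div_iff₀ (by positivity)]
          nlinarith [hd, hR0]
        linarith
      linarith
  refine ⟨w, hwz, hglob, ?_⟩
  apply le_antisymm
  · exact ciInf_le ⟨g w + ‖w - z‖ ^ 2 / (2 * μ), by rintro _ ⟨u, rfl⟩; exact hglob u⟩ w
  · exact le_ciInf hglob

private lemma moreau_le_self_pvs {Z : Type*} [NormedAddCommGroup Z] [InnerProductSpace ℝ Z]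
    [FiniteDimensional ℝ Z]
    {g : Z → ℝ} {Lg : ℝ} (hLg : 0 < Lg)
    (hgLip : ∀ z₁ z₂ : Z, |g z₁ - g z₂| ≤ Lg * ‖z₁ - z₂‖)
    {μ : ℝ} (hμ : 0 < μ) (z : Z) : moreauEnv g μ z ≤ g z := by
  obtain ⟨w, _, hmin, heq⟩ := moreau_min_pvs hLg hgLip hμ z
  rw [heq]
  have := hmin z
  simpa using this

private lemma moreau_ge_pvs {Z : Type*} [NormedAddCommGroup Z] [InnerProductSpace ℝ Z]
    [FiniteDimensional ℝ Z]
    {g : Z → ℝ} {Lg : ℝ} (hLg : 0 < Lg)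
    (hgLip : ∀ z₁ z₂ : Z, |g z₁ - g z₂| ≤ Lg * ‖z₁ - z₂‖)
    {μ : ℝ} (hμ : 0 < μ) (z : Z) : g z - 2 * μ * Lg ^ 2 ≤ moreauEnv g μ z := by
  obtain ⟨w, hwz, _, heq⟩ := moreau_min_pvs hLg hgLip hμ z
  rw [heq]
  have h1 : g z - g w ≤ Lg * ‖w - z‖ := by
    have := hgLip z w
    rw [norm_sub_rev] at this
    exact (abs_le.mp this).2
  have h2 : Lg * ‖w - z‖ ≤ Lg * (2 * μ * Lg) := mul_le_mul_of_nonneg_left hwz hLg.le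
  have h3 : 0 ≤ ‖w - z‖ ^ 2 / (2 * μ) := by positivity
  nlinarith

private lemma moreau_diff_pvs {Z : Type*} [NormedAddCommGroup Z] [InnerProductSpace ℝ Z]
    [FiniteDimensional ℝ Z]
    {g : Z → ℝ} {Lg : ℝ} (hLg : 0 < Lg)
    (hgLip : ∀ z₁ z₂ : Z, |g z₁ - g z₂| ≤ Lg * ‖z₁ - z₂‖)
    {μ μ' : ℝ} (hμ' : 0 < μ') (hle : μ' ≤ μ) (z : Z) :
    moreauEnv g μ' z ≤ moreauEnv g μ z + 2 * Lg ^ 2 * (μ / μ') * (μ - μ') := by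
  have hμ : 0 < μ := lt_of_lt_of_le hμ' hle
  obtain ⟨w, hwz, hmin, heq⟩ := moreau_min_pvs hLg hgLip hμ z
  obtain ⟨w', _, hmin', _⟩ := moreau_min_pvs hLg hgLip hμ' z
  have hstep : moreauEnv g μ' z ≤ g w + ‖w - z‖ ^ 2 / (2 * μ') :=
    ciInf_le ⟨g w' + ‖w' - z‖ ^ 2 / (2 * μ'), by rintro _ ⟨u, rfl⟩; exact hmin' u⟩ w
  have h1 : ‖w - z‖ ^ 2 ≤ 4 * μ ^ 2 * Lg ^ 2 := by nlinarith [norm_nonneg (w - z)]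
  have key : ‖w - z‖ ^ 2 / (2 * μ') - ‖w - z‖ ^ 2 / (2 * μ)
      = ‖w - z‖ ^ 2 * ((μ - μ') / (2 * μ * μ')) := by
    field_simp
  have key2 : ‖w - z‖ ^ 2 * ((μ - μ') / (2 * μ * μ'))
      ≤ (4 * μ ^ 2 * Lg ^ 2) * ((μ - μ') / (2 * μ * μ')) :=
    mul_le_mul_of_nonneg_right h1 (div_nonneg (by linarith) (by positivity))
  have key3 : (4 * μ ^ 2 * Lg ^ 2) * ((μ - μ') / (2 * μ * μ'))
      = 2 * Lg ^ 2 * (μ / μ') * (μ - μ') := by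
    field_simp
    ring
  rw [heq]
  linarith

private lemma ecoe_le_pvs {a b d e f : ℝ}
    (h : (a : EReal) + (b : EReal) ≤ (d : EReal) + (e : EReal) - (f : EReal)) :
    a + b ≤ d + e - f := by
  rw [← EReal.coe_add, ← EReal.coe_add, ← EReal.coe_sub, EReal.coe_le_coe_iff] at h
  exact h

private lemma ecoe_le_pvs' {a b d e : ℝ}
    (h : (a : EReal) + (b : EReal) ≤ (d : EReal) + (e : EReal)) :
    a + b ≤ d + e := by
  rw [← EReal.coe_add, ← EReal.coe_add, EReal.coe_le_coe_iff] at h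
  exact h

/-- Convergence rate of the proximal variable smoothing algorithm. -/
theorem proximal_variable_smoothing_rate
    {X : Type*} [NormedAddCommGroup X] [InnerProductSpace ℝ X] [FiniteDimensional ℝ X]
    {Z : Type*} [NormedAddCommGroup Z] [InnerProductSpace ℝ Z] [FiniteDimensional ℝ Z]
    (φ : X → EReal) (hφ : Gamma0 φ)
    (prox : ℝ → X → X) (hprox : ∀ γ : ℝ, 0 < γ → ∀ y : X, IsProxPt φ γ y (prox γ y))
    (h : X → ℝ) (hdiff : Differentiable ℝ h)
    (Lh : ℝ) (hLh : 0 < Lh)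
    (hhLip : ∀ x₁ ∈ {x : X | φ x ≠ ⊤}, ∀ x₂ ∈ {x : X | φ x ≠ ⊤},
      ‖gradient h x₁ - gradient h x₂‖ ≤ Lh * ‖x₁ - x₂‖)
    (S : X → Z) (hS : ContDiff ℝ 1 S)
    (g : Z → ℝ) (Lg : ℝ) (hLg : 0 < Lg)
    (hgLip : ∀ z₁ z₂ : Z, |g z₁ - g z₂| ≤ Lg * ‖z₁ - z₂‖)
    (η : ℝ) (hη : 0 < η)
    (hwc : ConvexOn ℝ Set.univ fun z : Z => g z + η / 2 * ‖z‖ ^ 2)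
    (F : X → ℝ) (hF : F = fun x => h x + g (S x))
    (hmin : ∃ xstar : X, ∀ y : X, ((F xstar : ℝ) : EReal) + φ xstar ≤ ((F y : ℝ) : EReal) + φ y)
    (c : ℝ) (hc0 : 0 < c) (hc1 : c < 1)
    (x : ℕ → X) (hx0 : φ (x 0) ≠ ⊤)
    (μ : ℕ → ℝ) (hμpos : ∀ n, 0 < μ n) (hμle : ∀ n, μ n ≤ (2 * η)⁻¹)
    (hμ0 : Tendsto μ atTop (𝓝 0)) (hμns : ¬ Summable μ)
    (M : ℝ) (hM : 1 ≤ M)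
    (hratio : ∀ n, M⁻¹ ≤ μ (n + 1) / μ n ∧ μ (n + 1) / μ n ≤ 1)
    (Fn : ℕ → X → ℝ) (hFn : ∀ n, Fn n = fun y => h y + moreauEnv g (μ n) (S y))
    (ϖ₁ ϖ₂ : ℝ) (hϖ₁ : 0 ≤ ϖ₁) (hϖ₂ : 0 < ϖ₂)
    (hFnLip : ∀ n, ∀ x₁ ∈ {y : X | φ y ≠ ⊤}, ∀ x₂ ∈ {y : X | φ y ≠ ⊤},
      ‖gradient (Fn n) x₁ - gradient (Fn n) x₂‖ ≤ (ϖ₁ + ϖ₂ * (μ n)⁻¹) * ‖x₁ - x₂‖)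
    (γ : ℕ → ℝ) (β γbar : ℝ) (hβ : 0 < β) (hγbar : 0 < γbar)
    (hγlb : ∀ n, β * (ϖ₁ + ϖ₂ * (μ n)⁻¹)⁻¹ ≤ γ n) (hγub : ∀ n, γ n ≤ γbar)
    (hArmijo : ∀ n, ArmijoCond φ prox (Fn n) c (γ n) (x n))
    (hupdate : ∀ n, x (n + 1) = prox (γ n) (x n - γ n • gradient (Fn n) (x n)))
    : ∃ χ : ℝ, 0 < χ ∧ ∀ k₁ k₂ : ℕ, k₁ ≤ k₂ →
      ∃ n ∈ Finset.Icc k₁ k₂,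
        ‖γbar⁻¹ • (x n - prox γbar (x n - γbar • gradient (Fn n) (x n)))‖ ≤
          Real.sqrt (χ / ∑ i ∈ Finset.Icc k₁ k₂, μ i) := by
  classical
  have hM0 : (0:ℝ) < M := lt_of_lt_of_le one_pos hM
  have hη2 : (0:ℝ) < (2*η)⁻¹ := inv_pos.mpr (by linarith)
  have hγpos : ∀ n, 0 < γ n := by
    intro n
    have h1 : 0 < ϖ₁ + ϖ₂ * (μ n)⁻¹ :=
      add_pos_of_nonneg_of_pos hϖ₁ (mul_pos hϖ₂ (inv_pos.mpr (hμpos n)))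
    exact lt_of_lt_of_le (mul_pos hβ (inv_pos.mpr h1)) (hγlb n)
  have hμdec : ∀ n, μ (n+1) ≤ μ n := fun n => (div_le_one (hμpos n)).mp (hratio n).2
  have hμM : ∀ n, μ n ≤ M * μ (n+1) := by
    intro n
    have h1 := (hratio n).1
    rw [le_div_iff₀ (hμpos n)] at h1
    calc μ n = M * (M⁻¹ * μ n) := by field_simp
      _ ≤ M * μ (n+1) := mul_le_mul_of_nonneg_left h1 hM0.le
  have hfin : ∀ n, φ (x n) ≠ ⊤ := by
    intro n
    induction n with
    | zero => exact hx0
    | succ k _ => rw [hupdate k]; exact prox_ne_top_pvs hφ (hprox (γ k) (hγpos k) _)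
  have hφeq : ∀ n, φ (x n) = (((φ (x n)).toReal : ℝ) : EReal) := fun n =>
    (EReal.coe_toReal (hfin n) (hφ.ne_bot (x n))).symm
  obtain ⟨xstar, hstar⟩ := hmin
  have hxsT : φ xstar ≠ ⊤ := by
    intro hT
    have hh := hstar (x 0)
    rw [hT] at hh
    have h2 : ((F xstar : ℝ) : EReal) + ⊤ = ⊤ := by
      rw [add_comm, EReal.top_add_iff_ne_bot]; exact EReal.coe_ne_bot _
    rw [h2, top_le_iff] at hh
    have h3 : ((F (x 0) : ℝ) : EReal) + φ (x 0) ≠ ⊤ := by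
      rw [hφeq 0, ← EReal.coe_add]; exact EReal.coe_ne_top _
    exact h3 hh
  have hφs : φ xstar = (((φ xstar).toReal : ℝ) : EReal) :=
    (EReal.coe_toReal hxsT (hφ.ne_bot xstar)).symm
  obtain ⟨D, hD⟩ : ∃ D : ℝ, D = 2 * Lg ^ 2 * M := ⟨_, rfl⟩
  have hD0 : 0 ≤ D := by rw [hD]; positivity
  obtain ⟨B, hB⟩ : ∃ B : ℕ → ℝ,
      B = fun n => Fn n (x n) + (φ (x n)).toReal + D * μ n := ⟨_, rfl⟩
  obtain ⟨T, hT⟩ : ∃ T : ℕ → ℝ,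
      T = fun n => c * γ n * ‖(γ n)⁻¹ • (x n - x (n+1))‖ ^ 2 := ⟨_, rfl⟩
  have hT0 : ∀ n, 0 ≤ T n := by
    intro n
    simp only [hT]
    exact mul_nonneg (mul_nonneg hc0.le (hγpos n).le) (sq_nonneg _)
  -- Armijo in real form
  have step_a : ∀ n, Fn n (x (n+1)) + (φ (x (n+1))).toReal + T n
      ≤ Fn n (x n) + (φ (x n)).toReal := by
    intro n
    have hA' := hArmijo n
    unfold ArmijoCond at hA'
    rw [← hupdate n] at hA'
    rw [hφeq n, hφeq (n+1)] at hA'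
    have h1 := ecoe_le_pvs hA'
    simp only [hT]
    linarith
  -- envelope transfer
  have step_b : ∀ n, ∀ y : X, Fn (n+1) y ≤ Fn n y + D * (μ n - μ (n+1)) := by
    intro n y
    have h1 : Fn (n+1) y = h y + moreauEnv g (μ (n+1)) (S y) := by rw [hFn (n+1)]
    have h2 : Fn n y = h y + moreauEnv g (μ n) (S y) := by rw [hFn n]
    have h3 := moreau_diff_pvs hLg hgLip (hμpos (n+1)) (hμdec n) (S y)
    have h4 : 2 * Lg ^ 2 * (μ n / μ (n+1)) * (μ n - μ (n+1))
        ≤ 2 * Lg ^ 2 * M * (μ n - μ (n+1)) := by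
      apply mul_le_mul_of_nonneg_right _ (by linarith [hμdec n])
      apply mul_le_mul_of_nonneg_left _ (by positivity : (0:ℝ) ≤ 2 * Lg ^ 2)
      rw [div_le_iff₀ (hμpos (n+1))]
      linarith [hμM n]
    rw [h1, h2, hD]
    linarith
  have step_c : ∀ n, B (n+1) + T n ≤ B n := by
    intro n
    simp only [hB]
    have h1 := step_a n
    have h2 := step_b n (x (n+1))
    linarith
  have hBmono : ∀ n, B n ≤ B 0 := by
    intro n
    induction n with
    | zero => exact le_refl _
    | succ k ih => linarith [step_c k, hT0 k]
  -- lower bound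
  have hlow : ∀ n, (F xstar + (φ xstar).toReal) - 2 * (2*η)⁻¹ * Lg ^ 2 ≤ B n := by
    intro n
    have h1 : g (S (x n)) - 2 * (μ n) * Lg ^ 2 ≤ moreauEnv g (μ n) (S (x n)) :=
      moreau_ge_pvs hLg hgLip (hμpos n) _
    have h2 : F xstar + (φ xstar).toReal ≤ F (x n) + (φ (x n)).toReal := by
      have hh := hstar (x n)
      rw [hφeq n, hφs] at hh
      exact ecoe_le_pvs' hh
    have h3 : Fn n (x n) = h (x n) + moreauEnv g (μ n) (S (x n)) := by rw [hFn n]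
    have h4 : F (x n) = h (x n) + g (S (x n)) := by rw [hF]
    have h5 : 2 * (μ n) * Lg ^ 2 ≤ 2 * (2*η)⁻¹ * Lg ^ 2 := by
      nlinarith [hμle n, sq_nonneg Lg]
    have h6 : 0 ≤ D * μ n := mul_nonneg hD0 (hμpos n).le
    simp only [hB]
    linarith
  -- telescoping sum
  have hsum : ∀ k₂ k₁ : ℕ, k₁ ≤ k₂ →
      ∑ n ∈ Finset.Icc k₁ k₂, T n ≤ B k₁ - B (k₂+1) := by
    intro k₂
    induction k₂ with
    | zero =>
      intro k₁ hk
      obtain rfl := Nat.le_zero.mp hk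
      simp only [Finset.Icc_self, Finset.sum_singleton]
      linarith [step_c 0]
    | succ k ih =>
      intro k₁ hk
      by_cases hk' : k₁ ≤ k
      · rw [Finset.sum_Icc_succ_top (hk'.trans (Nat.le_succ k))]
        have := ih k₁ hk'
        linarith [step_c (k+1)]
      · have : k₁ = k+1 := by omega
        subst this
        simp only [Finset.Icc_self, Finset.sum_singleton]
        linarith [step_c (k+1)]
  obtain ⟨C₂, hC₂⟩ : ∃ C₂ : ℝ,
      C₂ = B 0 - ((F xstar + (φ xstar).toReal) - 2 * (2*η)⁻¹ * Lg ^ 2) := ⟨_, rfl⟩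
  have hsumC : ∀ k₁ k₂ : ℕ, k₁ ≤ k₂ → ∑ n ∈ Finset.Icc k₁ k₂, T n ≤ C₂ := by
    intro k₁ k₂ hk
    have h1 := hsum k₂ k₁ hk
    have h2 := hBmono k₁
    have h3 := hlow (k₂+1)
    rw [hC₂]
    linarith
  -- stepsize vs μ
  obtain ⟨c₃, hc₃⟩ : ∃ c₃ : ℝ, c₃ = β / (ϖ₁ * (2*η)⁻¹ + ϖ₂) := ⟨_, rfl⟩
  have hden : 0 < ϖ₁ * (2*η)⁻¹ + ϖ₂ := add_pos_of_nonneg_of_pos (mul_nonneg hϖ₁ hη2.le) hϖ₂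
  have hc₃0 : 0 < c₃ := by rw [hc₃]; exact div_pos hβ hden
  have hμγ : ∀ n, c₃ * μ n ≤ γ n := by
    intro n
    have hμne : μ n ≠ 0 := (hμpos n).ne'
    have hd : 0 < ϖ₁ * μ n + ϖ₂ :=
      add_pos_of_nonneg_of_pos (mul_nonneg hϖ₁ (hμpos n).le) hϖ₂
    have e : ϖ₁ + ϖ₂ * (μ n)⁻¹ = (ϖ₁ * μ n + ϖ₂) / μ n := by
      field_simp
    have e2 : β * (ϖ₁ + ϖ₂ * (μ n)⁻¹)⁻¹ = β * μ n / (ϖ₁ * μ n + ϖ₂) := by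
      rw [e, inv_div]
      ring
    have h3 : c₃ * μ n ≤ β * μ n / (ϖ₁ * μ n + ϖ₂) := by
      rw [hc₃, div_mul_eq_mul_div, div_le_div_iff₀ hden hd]
      nlinarith [mul_nonneg (mul_nonneg (mul_nonneg hβ.le (hμpos n).le) hϖ₁)
        (sub_nonneg.mpr (hμle n))]
    have h4 := hγlb n
    rw [e2] at h4
    linarith
  -- stationarity measure with stepsize γbar
  have hGu : ∀ n, ‖γbar⁻¹ • (x n - prox γbar (x n - γbar • gradient (Fn n) (x n)))‖
      ≤ ‖(γ n)⁻¹ • (x n - x (n+1))‖ := by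
    intro n
    have hm := prox_mono_pvs hφ (hγpos n) (hγub n)
      (hprox (γ n) (hγpos n) (x n - γ n • gradient (Fn n) (x n)))
      (hprox γbar hγbar (x n - γbar • gradient (Fn n) (x n)))
    rw [← hupdate n] at hm
    exact hm
  have hterm : ∀ n, μ n * ‖γbar⁻¹ • (x n - prox γbar (x n - γbar • gradient (Fn n) (x n)))‖ ^ 2
      ≤ (1/(c*c₃)) * T n := by
    intro n
    have h1 : ‖γbar⁻¹ • (x n - prox γbar (x n - γbar • gradient (Fn n) (x n)))‖ ^ 2
        ≤ ‖(γ n)⁻¹ • (x n - x (n+1))‖ ^ 2 :=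
      pow_le_pow_left₀ (norm_nonneg _) (hGu n) 2
    have h2 : μ n * ‖γbar⁻¹ • (x n - prox γbar (x n - γbar • gradient (Fn n) (x n)))‖ ^ 2
        ≤ μ n * ‖(γ n)⁻¹ • (x n - x (n+1))‖ ^ 2 := mul_le_mul_of_nonneg_left h1 (hμpos n).le
    have h3 : μ n ≤ γ n / c₃ := by
      rw [le_div_iff₀ hc₃0]
      linarith [hμγ n]
    have h4 : μ n * ‖(γ n)⁻¹ • (x n - x (n+1))‖ ^ 2
        ≤ (γ n / c₃) * ‖(γ n)⁻¹ • (x n - x (n+1))‖ ^ 2 :=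
      mul_le_mul_of_nonneg_right h3 (sq_nonneg _)
    have h5 : (1/(c*c₃)) * T n = (γ n / c₃) * ‖(γ n)⁻¹ • (x n - x (n+1))‖ ^ 2 := by
      simp only [hT]
      field_simp
    linarith
  obtain ⟨χ, hχ⟩ : ∃ χ : ℝ, χ = max ((1/(c*c₃)) * C₂) 1 := ⟨_, rfl⟩
  have hχ0 : (0:ℝ) < χ := by rw [hχ]; exact lt_of_lt_of_le one_pos (le_max_right _ _)
  refine ⟨χ, hχ0, ?_⟩
  intro k₁ k₂ hk
  by_contra hcon
  push_neg at hcon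
  have hne : (Finset.Icc k₁ k₂).Nonempty := Finset.nonempty_Icc.mpr hk
  obtain ⟨Ssum, hSsum⟩ : ∃ Ssum : ℝ, Ssum = ∑ i ∈ Finset.Icc k₁ k₂, μ i := ⟨_, rfl⟩
  rw [← hSsum] at hcon
  have hSpos : 0 < Ssum := by
    rw [hSsum]
    exact Finset.sum_pos (fun i _ => hμpos i) hne
  have hdiv0 : 0 ≤ χ / Ssum := div_nonneg hχ0.le hSpos.le
  have key : ∀ n ∈ Finset.Icc k₁ k₂, μ n * (χ / Ssum)
      < μ n * ‖γbar⁻¹ • (x n - prox γbar (x n - γbar • gradient (Fn n) (x n)))‖ ^ 2 := by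
    intro n hn
    apply mul_lt_mul_of_pos_left _ (hμpos n)
    have h1 := hcon n hn
    have h2 : Real.sqrt (χ / Ssum) ^ 2 = χ / Ssum := Real.sq_sqrt hdiv0
    nlinarith [Real.sqrt_nonneg (χ / Ssum), h1]
  have hlt : ∑ n ∈ Finset.Icc k₁ k₂, μ n * (χ / Ssum)
      < ∑ n ∈ Finset.Icc k₁ k₂,
        μ n * ‖γbar⁻¹ • (x n - prox γbar (x n - γbar • gradient (Fn n) (x n)))‖ ^ 2 :=
    Finset.sum_lt_sum_of_nonempty hne key
  have heq : ∑ n ∈ Finset.Icc k₁ k₂, μ n * (χ / Ssum) = χ := by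
    rw [← Finset.sum_mul, ← hSsum, mul_comm, div_mul_cancel₀ _ (ne_of_gt hSpos)]
  have hub2 : ∑ n ∈ Finset.Icc k₁ k₂,
      μ n * ‖γbar⁻¹ • (x n - prox γbar (x n - γbar • gradient (Fn n) (x n)))‖ ^ 2
      ≤ (1/(c*c₃)) * C₂ := by
    calc ∑ n ∈ Finset.Icc k₁ k₂,
        μ n * ‖γbar⁻¹ • (x n - prox γbar (x n - γbar • gradient (Fn n) (x n)))‖ ^ 2
        ≤ ∑ n ∈ Finset.Icc k₁ k₂, (1/(c*c₃)) * T n :=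
          Finset.sum_le_sum (fun n _ => hterm n)
      _ = (1/(c*c₃)) * ∑ n ∈ Finset.Icc k₁ k₂, T n := by rw [Finset.mul_sum]
      _ ≤ (1/(c*c₃)) * C₂ := by
          apply mul_le_mul_of_nonneg_left (hsumC k₁ k₂ hk)
          have : 0 < c * c₃ := mul_pos hc0 hc₃0
          positivity
  have hfinal : (1/(c*c₃)) * C₂ ≤ χ := by rw [hχ]; exact le_max_left _ _
  rw [heq] at hlt
  linarith
end
end

section
/- Vanishing liminf of the smoothed stationarity measure along the proximal variable smoothing algorithm: Under the same setting as the convergence-rate theorem (F := h + g∘S with φ ∈ Γ₀(X), h differentiable with Lipschitz gradient on dom φ, S continuously differentiable, g L_g-Lipschitz and η-weakly convex, F + φ attaining its minimum; c ∈ (0,1), x_1 ∈ dom φ; (μ_n) ⊂ (0,(2η)⁻¹] with μ_n → 0, ∑μ_n = +∞, M⁻¹ ≤ μ_{n+1}/μ_n ≤ 1; F_n := h + g_{μ_n}∘S with ∇F_n Lipschitz on dom φ with constant L_n = ϖ₁ + ϖ₂ μ_n⁻¹; stepsizes β L_n⁻¹ ≤ γ_n ≤ γ̄ satisfying the Armijo-type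 condition with parameter c; x_{n+1} := prox_{γ_nφ}(x_n − γ_n ∇F_n(x_n))), one has liminf_{n→∞} ‖(x_n − prox_{γ̄φ}(x_n − γ̄ ∇F_n(x_n)))/γ̄‖ = 0. -/
open Filter Topology Pointwise

noncomputable section

section Aux

variable {X : Type*} [NormedAddCommGroup X] [InnerProductSpace ℝ X]

lemma gamma0_prox_ne_top {φ : X → EReal} (hφ : Gamma0 φ) {γ : ℝ} {y p : X}
    (hp : IsProxPt φ γ y p) : φ p ≠ ⊤ := by
  obtain ⟨q, hq⟩ := hφ.proper
  intro hT
  have h1 := hp.1 q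
  rw [hT, EReal.top_add_of_ne_bot (EReal.coe_ne_bot _), top_le_iff] at h1
  exact (EReal.add_lt_top hq (EReal.coe_ne_top _)).ne h1

lemma le_of_forall_le_add_small {A B c : ℝ} (hc : 0 ≤ c)
    (h : ∀ t : ℝ, 0 < t → t ≤ 1 → A ≤ B + t * c) : A ≤ B := by
  by_contra hAB
  push_neg at hAB
  have hD : 0 < (A - B) / (2 * (c + 1)) := div_pos (by linarith) (by linarith)
  set t : ℝ := min 1 ((A - B) / (2 * (c + 1))) with ht
  have htpos : 0 < t := lt_min one_pos hD
  have h1 := h t htpos (min_le_left _ _)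
  have h2 : t ≤ (A - B) / (2 * (c + 1)) := min_le_right _ _
  have h4 : ((A - B) / (2 * (c + 1))) * (2 * (c + 1)) = A - B :=
    div_mul_cancel₀ _ (by positivity)
  nlinarith [mul_le_mul_of_nonneg_right h2 hc]

lemma prox_var_ineq {φ : X → EReal} (hφ : Gamma0 φ) {γ : ℝ} (hγ : 0 < γ) {y p : X}
    (hp : IsProxPt φ γ y p) {q : X} (hq : φ q ≠ ⊤) :
    (inner ℝ (y - p) (q - p) : ℝ) ≤ γ * ((φ q).toReal - (φ p).toReal) := by
  have hpfin : φ p ≠ ⊤ := gamma0_prox_ne_top hφ hp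
  set a : ℝ := (φ p).toReal with ha
  set b : ℝ := (φ q).toReal with hb
  have hpa : φ p = ((a : ℝ) : EReal) := (EReal.coe_toReal hpfin (hφ.ne_bot p)).symm
  have hqb : φ q = ((b : ℝ) : EReal) := (EReal.coe_toReal hq (hφ.ne_bot q)).symm
  have key : ∀ t : ℝ, 0 < t → t ≤ 1 →
      (inner ℝ (y - p) (q - p) : ℝ) ≤ γ * (b - a) + t * (‖q - p‖ ^ 2 / 2) := by
    intro t ht0 ht1
    have hcvx : φ (t • q + (1 - t) • p) ≤ (((t * b + (1 - t) * a : ℝ)) : EReal) := by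
      push_cast
      rw [← hpa, ← hqb]
      exact hφ.cvx q p t ht0.le ht1
    have hmain := hp.1 (t • q + (1 - t) • p)
    rw [hpa] at hmain
    have hchain : ((a : ℝ) : EReal) + ((‖p - y‖ ^ 2 / (2 * γ) : ℝ) : EReal) ≤
        (((t * b + (1 - t) * a + ‖t • q + (1 - t) • p - y‖ ^ 2 / (2 * γ) : ℝ)) : EReal) := by
      refine hmain.trans ?_
      calc φ (t • q + (1 - t) • p) + ((‖t • q + (1 - t) • p - y‖ ^ 2 / (2 * γ) : ℝ) : EReal)
          ≤ (((t * b + (1 - t) * a : ℝ)) : EReal) +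
              ((‖t • q + (1 - t) • p - y‖ ^ 2 / (2 * γ) : ℝ) : EReal) :=
            add_le_add_left hcvx _
        _ = _ := by norm_cast
    have hreal : a + ‖p - y‖ ^ 2 / (2 * γ) ≤
        t * b + (1 - t) * a + ‖t • q + (1 - t) • p - y‖ ^ 2 / (2 * γ) := by
      exact_mod_cast hchain
    have hpt : t • q + (1 - t) • p - y = (p - y) + t • (q - p) := by module
    have hexp : ‖(p - y) + t • (q - p)‖ ^ 2 =
        ‖p - y‖ ^ 2 + 2 * (t * (inner ℝ (p - y) (q - p) : ℝ)) + t ^ 2 * ‖q - p‖ ^ 2 := by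
      rw [norm_add_sq_real, real_inner_smul_right, norm_smul, Real.norm_eq_abs,
        abs_of_pos ht0, mul_pow]
    rw [hpt, hexp, add_div, add_div] at hreal
    have hI : (inner ℝ (y - p) (q - p) : ℝ) = -(inner ℝ (p - y) (q - p) : ℝ) := by
      rw [← inner_neg_left]; norm_num
    have hkey : 0 ≤ t * (b - a) + 2 * (t * (inner ℝ (p - y) (q - p) : ℝ)) / (2 * γ)
        + t ^ 2 * ‖q - p‖ ^ 2 / (2 * γ) := by linarith
    have hkey2 : 0 ≤ (t * (b - a) + 2 * (t * (inner ℝ (p - y) (q - p) : ℝ)) / (2 * γ)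
        + t ^ 2 * ‖q - p‖ ^ 2 / (2 * γ)) * (2 * γ) := mul_nonneg hkey (by positivity)
    have hγne : (2 * γ) ≠ 0 := by positivity
    field_simp at hkey2
    rw [hI]
    nlinarith [hkey2, mul_pos ht0 hγ]
  exact le_of_forall_le_add_small (by positivity) key

lemma inner_combination {γ γ' b b' : ℝ} (hγ : 0 < γ) (hγγ' : γ ≤ γ') (A A' v : X)
    (I1 : (inner ℝ (A - γ • v) (A - A') : ℝ) ≤ γ * (b' - b))
    (I2 : (inner ℝ (A' - γ' • v) (A' - A) : ℝ) ≤ γ' * (b - b')) :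
    ‖γ'⁻¹ • A'‖ ≤ ‖γ⁻¹ • A‖ := by
  have hγ' : 0 < γ' := lt_of_lt_of_le hγ hγγ'
  rw [inner_sub_left, real_inner_smul_left, inner_sub_right,
    real_inner_self_eq_norm_sq] at I1 I2
  rw [real_inner_comm A A'] at I2
  have hCS : (inner ℝ A A' : ℝ) ≤ ‖A‖ * ‖A'‖ := real_inner_le_norm A A'
  have hv1 : (inner ℝ v (A - A') : ℝ) = inner ℝ v A - inner ℝ v A' := inner_sub_right v A A'
  have hv2 : (inner ℝ v (A' - A) : ℝ) = inner ℝ v A' - inner ℝ v A := inner_sub_right v A' A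
  rw [hv1] at I1
  rw [hv2] at I2
  have hmain : γ' * ‖A‖ ^ 2 + γ * ‖A'‖ ^ 2 ≤ (γ + γ') * (‖A‖ * ‖A'‖) := by
    nlinarith [mul_le_mul_of_nonneg_left I1 hγ'.le, mul_le_mul_of_nonneg_left I2 hγ.le]
  have hs : (0:ℝ) ≤ ‖A‖ := norm_nonneg _
  have hr : (0:ℝ) ≤ ‖A'‖ := norm_nonneg _
  have hkey : γ * ‖A'‖ ≤ γ' * ‖A‖ := by
    rcases le_or_gt ‖A'‖ ‖A‖ with hle | hlt
    · nlinarith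
    · nlinarith
  rw [norm_smul, norm_smul, Real.norm_eq_abs, Real.norm_eq_abs,
    abs_of_pos (inv_pos.2 hγ), abs_of_pos (inv_pos.2 hγ')]
  rw [inv_mul_le_iff₀ hγ']
  calc ‖A'‖ = (γ * ‖A'‖) * γ⁻¹ := by field_simp
    _ ≤ (γ' * ‖A‖) * γ⁻¹ := by nlinarith [inv_pos.2 hγ]
    _ = γ' * (γ⁻¹ * ‖A‖) := by ring

lemma grad_map_norm_mono {φ : X → EReal} (hφ : Gamma0 φ)
    (prox : ℝ → X → X) (hprox : ∀ γ : ℝ, 0 < γ → ∀ y : X, IsProxPt φ γ y (prox γ y))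
    {γ γ' : ℝ} (hγ : 0 < γ) (hγγ' : γ ≤ γ') (xx v : X) :
    ‖γ'⁻¹ • (xx - prox γ' (xx - γ' • v))‖ ≤ ‖γ⁻¹ • (xx - prox γ (xx - γ • v))‖ := by
  have hγ' : 0 < γ' := lt_of_lt_of_le hγ hγγ'
  have hp := hprox γ hγ (xx - γ • v)
  have hp' := hprox γ' hγ' (xx - γ' • v)
  have hfin := gamma0_prox_ne_top hφ hp
  have hfin' := gamma0_prox_ne_top hφ hp'
  have I1 := prox_var_ineq hφ hγ hp hfin'
  have I2 := prox_var_ineq hφ hγ' hp' hfin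
  refine inner_combination (b := (φ (prox γ (xx - γ • v))).toReal)
    (b' := (φ (prox γ' (xx - γ' • v))).toReal) hγ hγγ'
    (xx - prox γ (xx - γ • v)) (xx - prox γ' (xx - γ' • v)) v ?_ ?_
  · rw [show xx - prox γ (xx - γ • v) - γ • v = xx - γ • v - prox γ (xx - γ • v) from by module,
      show (xx - prox γ (xx - γ • v)) - (xx - prox γ' (xx - γ' • v)) =
        prox γ' (xx - γ' • v) - prox γ (xx - γ • v) from by module]
    exact I1
  · rw [show xx - prox γ' (xx - γ' • v) - γ' • v = xx - γ' • v - prox γ' (xx - γ' • v) from by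
        module,
      show (xx - prox γ' (xx - γ' • v)) - (xx - prox γ (xx - γ • v)) =
        prox γ (xx - γ • v) - prox γ' (xx - γ' • v) from by module]
    exact I2
section Moreau

variable {Z : Type*} [NormedAddCommGroup Z] [InnerProductSpace ℝ Z] [FiniteDimensional ℝ Z]
variable {g : Z → ℝ} {Lg : ℝ}

lemma moreau_pt_lb (hLg : 0 < Lg) (hgLip : ∀ z₁ z₂ : Z, |g z₁ - g z₂| ≤ Lg * ‖z₁ - z₂‖)
    {μ : ℝ} (hμ : 0 < μ) (z : Z) (w : Z) :
    g z - Lg ^ 2 * μ / 2 ≤ g w + ‖w - z‖ ^ 2 / (2 * μ) := by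
  have h1 : g z - g w ≤ Lg * ‖z - w‖ := (abs_le.1 (hgLip z w)).2
  have h2 : ‖z - w‖ = ‖w - z‖ := norm_sub_rev _ _
  rw [h2] at h1
  have h3 : Lg * ‖w - z‖ ≤ Lg ^ 2 * μ / 2 + ‖w - z‖ ^ 2 / (2 * μ) := by
    rw [div_add_div _ _ (by norm_num : (2:ℝ) ≠ 0) (by positivity : 2 * μ ≠ 0), le_div_iff₀ (by positivity : (0:ℝ) < 2 * (2 * μ))]
    nlinarith [sq_nonneg (‖w - z‖ - Lg * μ)]
  linarith

lemma moreau_bddBelow (hLg : 0 < Lg) (hgLip : ∀ z₁ z₂ : Z, |g z₁ - g z₂| ≤ Lg * ‖z₁ - z₂‖)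
    {μ : ℝ} (hμ : 0 < μ) (z : Z) :
    BddBelow (Set.range fun w => g w + ‖w - z‖ ^ 2 / (2 * μ)) := by
  refine ⟨g z - Lg ^ 2 * μ / 2, ?_⟩
  rintro _ ⟨w, rfl⟩
  exact moreau_pt_lb hLg hgLip hμ z w

lemma moreau_lb (hLg : 0 < Lg) (hgLip : ∀ z₁ z₂ : Z, |g z₁ - g z₂| ≤ Lg * ‖z₁ - z₂‖)
    {μ : ℝ} (hμ : 0 < μ) (z : Z) :
    g z - Lg ^ 2 * μ / 2 ≤ moreauEnv g μ z :=
  le_ciInf (moreau_pt_lb hLg hgLip hμ z)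

lemma moreau_attain (hLg : 0 < Lg) (hgLip : ∀ z₁ z₂ : Z, |g z₁ - g z₂| ≤ Lg * ‖z₁ - z₂‖)
    {μ : ℝ} (hμ : 0 < μ) (z : Z) :
    ∃ w : Z, ‖w - z‖ ≤ 2 * μ * Lg ∧
      moreauEnv g μ z = g w + ‖w - z‖ ^ 2 / (2 * μ) := by
  have hgc : Continuous g := by
    have : LipschitzWith (Real.toNNReal Lg) g := by
      refine LipschitzWith.of_dist_le_mul fun a b => ?_
      rw [Real.dist_eq, dist_eq_norm, Real.coe_toNNReal _ hLg.le]
      exact hgLip a b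
    exact this.continuous
  have hfc : Continuous fun w : Z => g w + ‖w - z‖ ^ 2 / (2 * μ) :=
    hgc.add (((continuous_id.sub continuous_const).norm.pow 2).div_const _)
  have hK : IsCompact (Metric.closedBall z (2 * μ * Lg)) := isCompact_closedBall z _
  have hne : (Metric.closedBall z (2 * μ * Lg)).Nonempty :=
    ⟨z, Metric.mem_closedBall_self (by positivity)⟩
  obtain ⟨w, hwK, hwmin⟩ := hK.exists_isMinOn hne hfc.continuousOn
  have hglobal : ∀ u : Z, g w + ‖w - z‖ ^ 2 / (2 * μ) ≤ g u + ‖u - z‖ ^ 2 / (2 * μ) := by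
    intro u
    by_cases hu : u ∈ Metric.closedBall z (2 * μ * Lg)
    · exact hwmin hu
    · have hdist : 2 * μ * Lg ≤ ‖u - z‖ := by
        rw [Metric.mem_closedBall, not_le, dist_eq_norm] at hu
        exact hu.le
      have h1 : g w + ‖w - z‖ ^ 2 / (2 * μ) ≤ g z := by
        have := hwmin (Metric.mem_closedBall_self (by positivity))
        simpa using this
      have h2 : g z ≤ g u + ‖u - z‖ ^ 2 / (2 * μ) := by
        have hl : g z - g u ≤ Lg * ‖z - u‖ := (abs_le.1 (hgLip z u)).2
        rw [norm_sub_rev] at hl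
        have : Lg * ‖u - z‖ ≤ ‖u - z‖ ^ 2 / (2 * μ) := by
          rw [le_div_iff₀ (by positivity : (0:ℝ) < 2 * μ)]
          nlinarith [norm_nonneg (u - z)]
        linarith
      linarith
  refine ⟨w, by rwa [Metric.mem_closedBall, dist_eq_norm] at hwK, le_antisymm ?_ ?_⟩
  · exact ciInf_le (moreau_bddBelow hLg hgLip hμ z) w
  · exact le_ciInf hglobal

lemma moreau_le_self (hLg : 0 < Lg) (hgLip : ∀ z₁ z₂ : Z, |g z₁ - g z₂| ≤ Lg * ‖z₁ - z₂‖)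
    {μ : ℝ} (hμ : 0 < μ) (z : Z) : moreauEnv g μ z ≤ g z := by
  have := ciInf_le (moreau_bddBelow hLg hgLip hμ z) z
  simpa [moreauEnv] using this

lemma moreau_compare (hLg : 0 < Lg) (hgLip : ∀ z₁ z₂ : Z, |g z₁ - g z₂| ≤ Lg * ‖z₁ - z₂‖)
    {μ μ' : ℝ} (hμ' : 0 < μ') (hle : μ' ≤ μ) (z : Z) :
    moreauEnv g μ' z ≤ moreauEnv g μ z + 2 * Lg ^ 2 * (μ / μ') * (μ - μ') := by
  have hμ : 0 < μ := lt_of_lt_of_le hμ' hle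
  obtain ⟨w, hwb, hwe⟩ := moreau_attain hLg hgLip hμ z
  have h1 : moreauEnv g μ' z ≤ g w + ‖w - z‖ ^ 2 / (2 * μ') :=
    ciInf_le (moreau_bddBelow hLg hgLip hμ' z) w
  have ht : (0:ℝ) ≤ ‖w - z‖ := norm_nonneg _
  have h2 : ‖w - z‖ ^ 2 / (2 * μ') ≤ ‖w - z‖ ^ 2 / (2 * μ) + 2 * Lg ^ 2 * (μ / μ') * (μ - μ') := by
    rw [div_add' _ _ _ (by positivity : (2:ℝ) * μ ≠ 0), div_le_div_iff₀ (by positivity) (by positivity)]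
    have hb2 : ‖w - z‖ ^ 2 ≤ (2 * μ * Lg) ^ 2 := by nlinarith
    have hRR : 2 * Lg ^ 2 * (μ / μ') * (μ - μ') * (2 * μ) * (2 * μ')
        = 8 * Lg ^ 2 * μ ^ 2 * (μ - μ') := by
      field_simp
      ring
    nlinarith [mul_le_mul_of_nonneg_right hb2 (sub_nonneg.2 hle), hRR]
  linarith

end Moreau

end Aux
set_option maxHeartbeats 1000000 in
/-- Vanishing liminf of the smoothed stationarity measure along
the proximal variable smoothing algorithm. -/
theorem proximal_variable_smoothing_liminf_zero
    {X : Type*} [NormedAddCommGroup X] [InnerProductSpace ℝ X] [FiniteDimensional ℝ X]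
    {Z : Type*} [NormedAddCommGroup Z] [InnerProductSpace ℝ Z] [FiniteDimensional ℝ Z]
    (φ : X → EReal) (hφ : Gamma0 φ)
    (prox : ℝ → X → X) (hprox : ∀ γ : ℝ, 0 < γ → ∀ y : X, IsProxPt φ γ y (prox γ y))
    (h : X → ℝ) (hdiff : Differentiable ℝ h)
    (Lh : ℝ) (hLh : 0 < Lh)
    (hhLip : ∀ x₁ ∈ {x : X | φ x ≠ ⊤}, ∀ x₂ ∈ {x : X | φ x ≠ ⊤},
      ‖gradient h x₁ - gradient h x₂‖ ≤ Lh * ‖x₁ - x₂‖)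
    (S : X → Z) (hS : ContDiff ℝ 1 S)
    (g : Z → ℝ) (Lg : ℝ) (hLg : 0 < Lg)
    (hgLip : ∀ z₁ z₂ : Z, |g z₁ - g z₂| ≤ Lg * ‖z₁ - z₂‖)
    (η : ℝ) (hη : 0 < η)
    (hwc : ConvexOn ℝ Set.univ fun z : Z => g z + η / 2 * ‖z‖ ^ 2)
    (F : X → ℝ) (hF : F = fun x => h x + g (S x))
    (hmin : ∃ xstar : X, ∀ y : X, ((F xstar : ℝ) : EReal) + φ xstar ≤ ((F y : ℝ) : EReal) + φ y)
    (c : ℝ) (hc0 : 0 < c) (hc1 : c < 1)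
    (x : ℕ → X) (hx0 : φ (x 0) ≠ ⊤)
    (μ : ℕ → ℝ) (hμpos : ∀ n, 0 < μ n) (hμle : ∀ n, μ n ≤ (2 * η)⁻¹)
    (hμ0 : Tendsto μ atTop (𝓝 0)) (hμns : ¬ Summable μ)
    (M : ℝ) (hM : 1 ≤ M)
    (hratio : ∀ n, M⁻¹ ≤ μ (n + 1) / μ n ∧ μ (n + 1) / μ n ≤ 1)
    (Fn : ℕ → X → ℝ) (hFn : ∀ n, Fn n = fun y => h y + moreauEnv g (μ n) (S y))
    (ϖ₁ ϖ₂ : ℝ) (hϖ₁ : 0 ≤ ϖ₁) (hϖ₂ : 0 < ϖ₂)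
    (hFnLip : ∀ n, ∀ x₁ ∈ {y : X | φ y ≠ ⊤}, ∀ x₂ ∈ {y : X | φ y ≠ ⊤},
      ‖gradient (Fn n) x₁ - gradient (Fn n) x₂‖ ≤ (ϖ₁ + ϖ₂ * (μ n)⁻¹) * ‖x₁ - x₂‖)
    (γ : ℕ → ℝ) (β γbar : ℝ) (hβ : 0 < β) (hγbar : 0 < γbar)
    (hγlb : ∀ n, β * (ϖ₁ + ϖ₂ * (μ n)⁻¹)⁻¹ ≤ γ n) (hγub : ∀ n, γ n ≤ γbar)
    (hArmijo : ∀ n, ArmijoCond φ prox (Fn n) c (γ n) (x n))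
    (hupdate : ∀ n, x (n + 1) = prox (γ n) (x n - γ n • gradient (Fn n) (x n)))
    : Filter.liminf
        (fun n =>
          ((‖γbar⁻¹ • (x n - prox γbar (x n - γbar • gradient (Fn n) (x n)))‖ : ℝ) : EReal))
        atTop = (0 : EReal) := by
  subst hF
  obtain ⟨xs, hxs⟩ := hmin
  have hM0 : (0:ℝ) < M := lt_of_lt_of_le one_pos hM
  have hγpos : ∀ n, 0 < γ n := by
    intro n
    refine lt_of_lt_of_le ?_ (hγlb n)
    have hden : 0 < ϖ₁ + ϖ₂ * (μ n)⁻¹ :=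
      add_pos_of_nonneg_of_pos hϖ₁ (mul_pos hϖ₂ (inv_pos.2 (hμpos n)))
    positivity
  have hμmono : ∀ n, μ (n + 1) ≤ μ n := by
    intro n
    have h2 := (hratio n).2
    rwa [div_le_one (hμpos n)] at h2
  have hμ0le : ∀ n, μ n ≤ μ 0 := by
    intro n
    induction n with
    | zero => exact le_refl _
    | succ k ih => exact (hμmono k).trans ih
  have hratioM : ∀ n, μ n / μ (n + 1) ≤ M := by
    intro n
    have h1 := (hratio n).1
    rw [le_div_iff₀ (hμpos n)] at h1
    rw [div_le_iff₀ (hμpos (n + 1))]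
    calc μ n = M * (M⁻¹ * μ n) := by field_simp
      _ ≤ M * μ (n + 1) := mul_le_mul_of_nonneg_left h1 hM0.le
  have hφfin : ∀ n, φ (x n) ≠ ⊤ := by
    intro n
    cases n with
    | zero => exact hx0
    | succ k =>
      rw [hupdate k]
      exact gamma0_prox_ne_top hφ (hprox (γ k) (hγpos k) _)
  set ψ : ℕ → ℝ := fun n => (φ (x n)).toReal with hψdef
  have hψ : ∀ n, φ (x n) = ((ψ n : ℝ) : EReal) := fun n =>
    (EReal.coe_toReal (hφfin n) (hφ.ne_bot _)).symm
  -- Armijo condition in ℝ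
  have hA : ∀ n, Fn n (x (n + 1)) + ψ (n + 1) ≤
      Fn n (x n) + ψ n - c * γ n * ‖(γ n)⁻¹ • (x n - x (n + 1))‖ ^ 2 := by
    intro n
    have h1 := hArmijo n
    unfold ArmijoCond at h1
    rw [← hupdate n, hψ n, hψ (n + 1)] at h1
    have h2 : ((Fn n (x (n + 1)) + ψ (n + 1) : ℝ) : EReal) ≤
        ((Fn n (x n) + ψ n - c * γ n * ‖(γ n)⁻¹ • (x n - x (n + 1))‖ ^ 2 : ℝ) : EReal) := by
      push_cast
      exact h1
    exact_mod_cast h2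
  have K0 : (0:ℝ) ≤ 2 * Lg ^ 2 * M := by positivity
  -- envelope shift
  have hshift : ∀ n, Fn (n + 1) (x (n + 1)) ≤
      Fn n (x (n + 1)) + 2 * Lg ^ 2 * M * (μ n - μ (n + 1)) := by
    intro n
    rw [hFn n, hFn (n + 1)]
    simp only
    have hc2 := moreau_compare hLg hgLip (hμpos (n + 1)) (hμmono n) (S (x (n + 1)))
    have hd : 0 ≤ μ n - μ (n + 1) := sub_nonneg.2 (hμmono n)
    have hb : 2 * Lg ^ 2 * (μ n / μ (n + 1)) * (μ n - μ (n + 1)) ≤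
        2 * Lg ^ 2 * M * (μ n - μ (n + 1)) := by
      have h5 : 0 ≤ M - μ n / μ (n + 1) := sub_nonneg.2 (hratioM n)
      nlinarith [mul_nonneg (mul_nonneg (by positivity : (0:ℝ) ≤ 2 * Lg ^ 2) h5) hd]
    linarith
  -- minimizer facts
  have hxsfin : φ xs ≠ ⊤ := by
    intro hT
    have h1 := hxs (x 0)
    rw [hT, hψ 0, EReal.add_top_of_ne_bot (EReal.coe_ne_bot _), top_le_iff] at h1
    exact (EReal.add_lt_top (EReal.coe_ne_top _) (EReal.coe_ne_top _)).ne h1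
  have hxsψ : φ xs = (((φ xs).toReal : ℝ) : EReal) :=
    (EReal.coe_toReal hxsfin (hφ.ne_bot _)).symm
  have hmreal : ∀ n, h xs + g (S xs) + (φ xs).toReal ≤ h (x n) + g (S (x n)) + ψ n := by
    intro n
    have h1 := hxs (x n)
    simp only at h1
    rw [hψ n, hxsψ] at h1
    exact_mod_cast h1
  -- lower bound for the merit function
  have hlow : ∀ n, h xs + g (S xs) + (φ xs).toReal - Lg ^ 2 * μ 0 / 2 ≤ Fn n (x n) + ψ n := by
    intro n
    have h1 : g (S (x n)) - Lg ^ 2 * μ n / 2 ≤ moreauEnv g (μ n) (S (x n)) :=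
      moreau_lb hLg hgLip (hμpos n) _
    have h2 := hmreal n
    have h3 : Lg ^ 2 * μ n / 2 ≤ Lg ^ 2 * μ 0 / 2 := by nlinarith [hμ0le n, sq_nonneg Lg]
    rw [hFn n]
    simp only
    linarith
  have hV : ∀ n, Fn (n + 1) (x (n + 1)) + ψ (n + 1) ≤ Fn n (x n) + ψ n
      + 2 * Lg ^ 2 * M * (μ n - μ (n + 1))
      - c * γ n * ‖(γ n)⁻¹ • (x n - x (n + 1))‖ ^ 2 := by
    intro n
    linarith [hA n, hshift n]
  have hsum : ∀ N, ∑ k ∈ Finset.range N, c * γ k * ‖(γ k)⁻¹ • (x k - x (k + 1))‖ ^ 2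
      ≤ Fn 0 (x 0) + ψ 0 + 2 * Lg ^ 2 * M * (μ 0 - μ N) - (Fn N (x N) + ψ N) := by
    intro N
    induction N with
    | zero => simp
    | succ N ih =>
      rw [Finset.sum_range_succ]
      have h1 := hV N
      linarith
  set C : ℝ := Fn 0 (x 0) + ψ 0 + 2 * Lg ^ 2 * M * μ 0
      - (h xs + g (S xs) + (φ xs).toReal - Lg ^ 2 * μ 0 / 2) with hCdef
  have hsum' : ∀ N, ∑ k ∈ Finset.range N, c * γ k * ‖(γ k)⁻¹ • (x k - x (k + 1))‖ ^ 2 ≤ C := by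
    intro N
    have h1 := hsum N
    have h2 := hlow N
    have h3 := mul_nonneg K0 (hμpos N).le
    rw [hCdef]
    linarith
  -- monotonicity of the gradient mapping norm
  have hmono : ∀ n, ‖γbar⁻¹ • (x n - prox γbar (x n - γbar • gradient (Fn n) (x n)))‖
      ≤ ‖(γ n)⁻¹ • (x n - x (n + 1))‖ := by
    intro n
    rw [hupdate n]
    exact grad_map_norm_mono hφ prox hprox (hγpos n) (hγub n) (x n) (gradient (Fn n) (x n))
  -- conclusion
  set f : ℕ → EReal := fun n =>
    ((‖γbar⁻¹ • (x n - prox γbar (x n - γbar • gradient (Fn n) (x n)))‖ : ℝ) : EReal) with hfdef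
  have hf0 : ∀ n, (0:EReal) ≤ f n := fun n => by
    simp only [hfdef]
    exact EReal.coe_nonneg.2 (norm_nonneg _)
  have hlim0 : (0:EReal) ≤ liminf f atTop :=
    le_liminf_of_le (by isBoundedDefault) (Eventually.of_forall hf0)
  by_contra hne
  have hlt : (0:EReal) < liminf f atTop := lt_of_le_of_ne hlim0 (Ne.symm hne)
  obtain ⟨ε, hε1, hε2⟩ := EReal.exists_between_coe_real hlt
  have hε0 : (0:ℝ) < ε := by exact_mod_cast hε1
  have hev : ∀ᶠ n in atTop, (ε : EReal) < f n := eventually_lt_of_lt_liminf hε2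
  obtain ⟨N, hN⟩ := eventually_atTop.1 hev
  have hGε : ∀ n, N ≤ n → ε ≤ ‖(γ n)⁻¹ • (x n - x (n + 1))‖ := by
    intro n hn
    have h1 := hN n hn
    simp only [hfdef] at h1
    have h2 : ε < ‖γbar⁻¹ • (x n - prox γbar (x n - γbar • gradient (Fn n) (x n)))‖ := by
      exact_mod_cast h1
    exact h2.le.trans (hmono n)
  have hc₀den : (0:ℝ) < ϖ₁ * μ 0 + ϖ₂ := by nlinarith [mul_nonneg hϖ₁ (hμpos 0).le]
  set c₀ : ℝ := β / (ϖ₁ * μ 0 + ϖ₂) with hc₀def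
  have hc₀ : 0 < c₀ := div_pos hβ hc₀den
  have hγμ : ∀ n, c₀ * μ n ≤ γ n := by
    intro n
    refine le_trans ?_ (hγlb n)
    have hμn := hμpos n
    have hDn : 0 < ϖ₁ * μ n + ϖ₂ := by nlinarith [mul_nonneg hϖ₁ hμn.le]
    have hDle : ϖ₁ * μ n + ϖ₂ ≤ ϖ₁ * μ 0 + ϖ₂ := by nlinarith [hμ0le n]
    have h2 : β * μ n / (ϖ₁ * μ 0 + ϖ₂) ≤ β * μ n / (ϖ₁ * μ n + ϖ₂) := by
      gcongr
    calc c₀ * μ n = β * μ n / (ϖ₁ * μ 0 + ϖ₂) := by rw [hc₀def]; ring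
      _ ≤ β * μ n / (ϖ₁ * μ n + ϖ₂) := h2
      _ = β * (ϖ₁ + ϖ₂ * (μ n)⁻¹)⁻¹ := by
          rw [show ϖ₁ + ϖ₂ * (μ n)⁻¹ = (ϖ₁ * μ n + ϖ₂) / μ n from by
            field_simp]
          rw [inv_div]
          ring
  have hden2 : (0:ℝ) < c * c₀ * ε ^ 2 := by positivity
  have hterm : ∀ n, N ≤ n →
      c * c₀ * ε ^ 2 * μ n ≤ c * γ n * ‖(γ n)⁻¹ • (x n - x (n + 1))‖ ^ 2 := by
    intro n hn
    have h1 := hGε n hn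
    have h2 : ε ^ 2 ≤ ‖(γ n)⁻¹ • (x n - x (n + 1))‖ ^ 2 := by
      exact pow_le_pow_left₀ hε0.le h1 2
    have h3 := hγμ n
    calc c * c₀ * ε ^ 2 * μ n = c * (c₀ * μ n) * ε ^ 2 := by ring
      _ ≤ c * γ n * ε ^ 2 :=
          mul_le_mul_of_nonneg_right (mul_le_mul_of_nonneg_left h3 hc0.le) (sq_nonneg ε)
      _ ≤ c * γ n * ‖(γ n)⁻¹ • (x n - x (n + 1))‖ ^ 2 :=
          mul_le_mul_of_nonneg_left h2 (mul_nonneg hc0.le (hγpos n).le)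
  have hCpos : 0 ≤ C := by simpa using hsum' 0
  refine hμns (summable_of_sum_range_le (fun n => (hμpos n).le)
    (c := (∑ k ∈ Finset.range N, μ k) + C / (c * c₀ * ε ^ 2)) ?_)
  intro m
  have hbound : ∀ m, N ≤ m → ∑ k ∈ Finset.range m, μ k ≤
      (∑ k ∈ Finset.range N, μ k) + C / (c * c₀ * ε ^ 2) := by
    intro m hm
    rw [← Finset.sum_range_add_sum_Ico μ hm]
    have hIco : ∑ k ∈ Finset.Ico N m, μ k ≤ C / (c * c₀ * ε ^ 2) := by
      rw [le_div_iff₀ hden2]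
      calc (∑ k ∈ Finset.Ico N m, μ k) * (c * c₀ * ε ^ 2)
          = ∑ k ∈ Finset.Ico N m, c * c₀ * ε ^ 2 * μ k := by
            rw [Finset.sum_mul]
            exact Finset.sum_congr rfl fun k _ => by ring
        _ ≤ ∑ k ∈ Finset.Ico N m, c * γ k * ‖(γ k)⁻¹ • (x k - x (k + 1))‖ ^ 2 :=
            Finset.sum_le_sum fun k hk => hterm k (Finset.mem_Ico.1 hk).1
        _ ≤ ∑ k ∈ Finset.range m, c * γ k * ‖(γ k)⁻¹ • (x k - x (k + 1))‖ ^ 2 := by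
            refine Finset.sum_le_sum_of_subset_of_nonneg ?_ fun k _ _ =>
              mul_nonneg (mul_nonneg hc0.le (hγpos k).le) (sq_nonneg _)
            intro k hk
            rw [Finset.mem_range]
            exact (Finset.mem_Ico.1 hk).2
        _ ≤ C := hsum' m
    linarith
  rcases le_or_gt N m with hm | hm
  · exact hbound m hm
  · have h1 : ∑ k ∈ Finset.range m, μ k ≤ ∑ k ∈ Finset.range N, μ k :=
      Finset.sum_le_sum_of_subset_of_nonneg (Finset.range_subset_range.2 hm.le)
        fun k _ _ => (hμpos k).le
    have h2 : 0 ≤ C / (c * c₀ * ε ^ 2) := div_nonneg hCpos hden2.le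
    linarith
end
end

section
/- Sufficient decrease property of the proximal gradient step restricted to dom φ: Let X be a finite-dimensional real inner product space, φ ∈ Γ₀(X), and J : X → ℝ continuously differentiable such that ∇J is Lipschitz continuous on dom φ with constant L_{∇J} > 0. Then for every x̄ ∈ dom φ and every γ ∈ (0, 2/L_{∇J}): (J + φ)(prox_{γφ}(x̄ − γ∇J(x̄))) ≤ (J + φ)(x̄) − γ(1 − γL_{∇J}/2)‖G_γ(x̄)‖², where G_γ(x̄) := (x̄ − prox_{γφ}(x̄ − γ∇J(x̄)))/γ. In particular, for any c ∈ (0,1) and any γ ∈ (0, 2(1 − c)/L_{∇J}], the Armijo-type condition (J + φ)(prox_{γφ}(x̄ − γ∇J(x̄))) ≤ (J + φ)(x̄) − cγ‖G_γ(x̄)‖² holds. -/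
open Filter Topology Pointwise

noncomputable section

lemma aux_small_step_limit {a b c K : ℝ} (hK : 0 ≤ K)
    (h : ∀ t : ℝ, 0 < t → t ≤ 1 → a ≤ b + c + t * K) : a ≤ b + c := by
  by_contra hcon
  push_neg at hcon
  have hε0 : 0 < a - (b + c) := by linarith
  have ht0 : 0 < min 1 ((a - (b + c)) / (2 * (K + 1))) := lt_min one_pos (by positivity)
  have h5 := h _ ht0 (min_le_left _ _)
  have h7 : min 1 ((a - (b + c)) / (2 * (K + 1))) ≤ (a - (b + c)) / (2 * (K + 1)) :=
    min_le_right _ _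
  have h8 : min 1 ((a - (b + c)) / (2 * (K + 1))) * K ≤ (a - (b + c)) / (2 * (K + 1)) * K :=
    mul_le_mul_of_nonneg_right h7 hK
  have h9 : (a - (b + c)) / (2 * (K + 1)) * K ≤ (a - (b + c)) / 2 := by
    rw [div_mul_eq_mul_div, div_le_div_iff₀ (by positivity) (by norm_num)]
    nlinarith
  linarith

set_option maxHeartbeats 1000000 in
/-- Sufficient decrease property of the proximal gradient step
restricted to `dom φ`, and the resulting Armijo-type condition. -/
theorem prox_gradient_sufficient_decrease
    {X : Type*} [NormedAddCommGroup X] [InnerProductSpace ℝ X] [FiniteDimensional ℝ X]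
    (φ : X → EReal) (hφ : Gamma0 φ)
    (prox : ℝ → X → X) (hprox : ∀ γ : ℝ, 0 < γ → ∀ y : X, IsProxPt φ γ y (prox γ y))
    (J : X → ℝ) (hJ : ContDiff ℝ 1 J)
    (L : ℝ) (hL : 0 < L)
    (hLip : ∀ x₁ ∈ {y : X | φ y ≠ ⊤}, ∀ x₂ ∈ {y : X | φ y ≠ ⊤},
      ‖gradient J x₁ - gradient J x₂‖ ≤ L * ‖x₁ - x₂‖)
    (xbar : X) (hxbar : φ xbar ≠ ⊤) :
    (∀ γ : ℝ, 0 < γ → γ < 2 / L →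
      ((J (prox γ (xbar - γ • gradient J xbar)) : ℝ) : EReal) +
          φ (prox γ (xbar - γ • gradient J xbar)) ≤
        ((J xbar : ℝ) : EReal) + φ xbar -
          ((γ * (1 - γ * L / 2) *
            ‖γ⁻¹ • (xbar - prox γ (xbar - γ • gradient J xbar))‖ ^ 2 : ℝ) : EReal)) ∧
    (∀ c : ℝ, 0 < c → c < 1 → ∀ γ : ℝ, 0 < γ → γ ≤ 2 * (1 - c) / L →
      ArmijoCond φ prox J c γ xbar) := by
  classical
  have hdJ : Differentiable ℝ J := hJ.differentiable one_ne_zero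
  have hL0 : (0:ℝ) < L := hL
  -- convexity of the domain of φ
  have hdom : ∀ w z : X, φ w ≠ ⊤ → φ z ≠ ⊤ → ∀ t : ℝ, 0 ≤ t → t ≤ 1 →
      φ (t • w + (1 - t) • z) ≠ ⊤ := by
    intro w z hw hz t ht0 ht1
    have h := hφ.cvx w z t ht0 ht1
    have hw' : ((φ w).toReal : EReal) = φ w := EReal.coe_toReal hw (hφ.ne_bot w)
    have hz' : ((φ z).toReal : EReal) = φ z := EReal.coe_toReal hz (hφ.ne_bot z)
    rw [← hw', ← hz'] at h
    intro htop
    rw [htop] at h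
    have hlt : ((t * (φ w).toReal + (1 - t) * (φ z).toReal : ℝ) : EReal) < ⊤ :=
      EReal.coe_lt_top _
    rw [EReal.coe_add, EReal.coe_mul, EReal.coe_mul] at hlt
    exact absurd h (not_le.mpr hlt)
  -- descent lemma on dom φ
  have descent : ∀ w z : X, φ w ≠ ⊤ → φ z ≠ ⊤ →
      J z ≤ J w + (inner ℝ (gradient J w) (z - w) : ℝ) + L / 2 * ‖z - w‖ ^ 2 := by
    intro w z hw hz
    have hLseg : ∀ t ∈ Set.Icc (0:ℝ) 1,
        ‖gradient J (w + t • (z - w)) - gradient J w‖ ≤ L * ‖t • (z - w)‖ := by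
      intro t ht
      have hmem : φ (w + t • (z - w)) ≠ ⊤ := by
        have heq : w + t • (z - w) = t • z + (1 - t) • w := by module
        rw [heq]; exact hdom z w hz hw t ht.1 ht.2
      have h := hLip _ hmem _ hw
      calc ‖gradient J (w + t • (z - w)) - gradient J w‖
          ≤ L * ‖w + t • (z - w) - w‖ := h
        _ = L * ‖t • (z - w)‖ := by rw [add_sub_cancel_left]
    set d := z - w with hd
    set g' : ℝ → ℝ := fun t => (inner ℝ (gradient J (w + t • d)) d : ℝ) with hg'
    have hderiv : ∀ t : ℝ, HasDerivAt (fun t : ℝ => J (w + t • d)) (g' t) t := by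
      intro t
      have h1 : HasDerivAt (fun t : ℝ => w + t • d) d t := by
        simpa using ((hasDerivAt_id t).smul_const d).const_add w
      have h2 := ((hdJ (w + t • d)).hasGradientAt.hasFDerivAt).comp_hasDerivAt t h1
      rw [InnerProductSpace.toDual_apply_apply] at h2; exact h2
    have hcont : Continuous g' := by
      have h1 : Continuous fun t : ℝ => w + t • d := by continuity
      have h2 : Continuous fun t : ℝ => fderiv ℝ J (w + t • d) :=
        (hJ.continuous_fderiv one_ne_zero).comp h1
      have h3 : Continuous fun t : ℝ => fderiv ℝ J (w + t • d) d := h2.clm_apply continuous_const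
      convert h3 using 1
      funext t
      have h4 := (hdJ (w + t • d)).hasGradientAt.hasFDerivAt.fderiv
      simp only [g', h4, ContinuousLinearMap.coe_coe, InnerProductSpace.toDual_apply_apply]
    have hint : ∫ t in (0:ℝ)..1, g' t = J z - J w := by
      have h := intervalIntegral.integral_eq_sub_of_hasDerivAt
        (f := fun t : ℝ => J (w + t • d)) (f' := g')
        (fun t _ => hderiv t) (hcont.intervalIntegrable 0 1)
      simpa [hd] using h
    have hbound : ∀ t ∈ Set.Icc (0:ℝ) 1, g' t ≤ g' 0 + L * ‖d‖ ^ 2 * t := by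
      intro t ht
      have h0 : g' t - g' 0 = (inner ℝ (gradient J (w + t • d) - gradient J w) d : ℝ) := by
        simp [g', inner_sub_left]
      have h1 : (inner ℝ (gradient J (w + t • d) - gradient J w) d : ℝ) ≤
          ‖gradient J (w + t • d) - gradient J w‖ * ‖d‖ := real_inner_le_norm _ _
      have h2 := hLseg t ht
      have h3 : ‖t • d‖ = t * ‖d‖ := by
        rw [norm_smul, Real.norm_eq_abs, abs_of_nonneg ht.1]
      have h4 : ‖gradient J (w + t • d) - gradient J w‖ * ‖d‖ ≤ L * (t * ‖d‖) * ‖d‖ :=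
        mul_le_mul_of_nonneg_right (h3 ▸ h2) (norm_nonneg d)
      nlinarith [h0, h1, h4]
    have hibound : ∫ t in (0:ℝ)..1, g' t ≤ ∫ t in (0:ℝ)..1, (g' 0 + L * ‖d‖ ^ 2 * t) := by
      apply intervalIntegral.integral_mono_on (by norm_num) (hcont.intervalIntegrable 0 1)
      · exact (continuous_const.add (continuous_const.mul continuous_id)).intervalIntegrable 0 1
      · exact hbound
    have hval : ∫ t in (0:ℝ)..1, (g' 0 + L * ‖d‖ ^ 2 * t) = g' 0 + L * ‖d‖ ^ 2 / 2 := by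
      have h5 : ∫ t in (0:ℝ)..1, (L * ‖d‖ ^ 2 * t) = L * ‖d‖ ^ 2 / 2 := by
        rw [intervalIntegral.integral_const_mul, integral_id]; ring
      rw [intervalIntegral.integral_add (intervalIntegrable_const)
        ((by fun_prop : Continuous fun t : ℝ => L * ‖d‖ ^ 2 * t).intervalIntegrable 0 1), h5]
      simp
    have hg0 : g' 0 = (inner ℝ (gradient J w) d : ℝ) := by simp [g']
    rw [hint, hval, hg0] at hibound
    nlinarith [hibound]
  -- main per-γ estimate
  have main : ∀ γ : ℝ, 0 < γ →
      φ (prox γ (xbar - γ • gradient J xbar)) ≠ ⊤ ∧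
      J (prox γ (xbar - γ • gradient J xbar)) +
          (φ (prox γ (xbar - γ • gradient J xbar))).toReal ≤
        J xbar + (φ xbar).toReal -
          (1 / γ - L / 2) * ‖xbar - prox γ (xbar - γ • gradient J xbar)‖ ^ 2 := by
    intro γ hγ
    have hγ0 : γ ≠ 0 := ne_of_gt hγ
    set y : X := xbar - γ • gradient J xbar with hy
    set p : X := prox γ y with hp
    have hmin := (hprox γ hγ y).1
    set b := (φ xbar).toReal with hb
    have hxb : ((b : ℝ) : EReal) = φ xbar := EReal.coe_toReal hxbar (hφ.ne_bot xbar)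
    have hptop : φ p ≠ ⊤ := by
      intro h
      have h1 := hmin xbar
      rw [h, ← hxb] at h1
      rw [EReal.top_add_of_ne_bot (by simp : ((‖p - y‖^2/(2*γ) : ℝ) : EReal) ≠ ⊥)] at h1
      rw [← EReal.coe_add] at h1
      exact absurd h1 (not_le.mpr (EReal.coe_lt_top _))
    set a := (φ p).toReal with ha
    have hpa : ((a : ℝ) : EReal) = φ p := EReal.coe_toReal hptop (hφ.ne_bot p)
    set u : X := xbar - p with hu
    set g : X := gradient J xbar with hgdef
    -- subgradient-type inequality via convexity
    have hstep : ∀ t : ℝ, 0 < t → t ≤ 1 →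
        a ≤ b + (inner ℝ (p - y) u : ℝ) / γ + t * (‖u‖ ^ 2 / (2 * γ)) := by
      intro t ht0 ht1
      have h1 := hmin (t • xbar + (1 - t) • p)
      have h2 := hφ.cvx xbar p t (le_of_lt ht0) ht1
      rw [← hxb, ← hpa] at h2
      have h2' : φ (t • xbar + (1 - t) • p) ≤ ((t * b + (1 - t) * a : ℝ) : EReal) := by
        rw [EReal.coe_add, EReal.coe_mul, EReal.coe_mul]; exact h2
      have h3 : ((a + ‖p - y‖ ^ 2 / (2 * γ) : ℝ) : EReal) ≤
          ((t * b + (1 - t) * a + ‖t • xbar + (1 - t) • p - y‖ ^ 2 / (2 * γ) : ℝ) : EReal) := by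
        rw [EReal.coe_add, EReal.coe_add, hpa]
        exact le_trans (h1) (add_le_add_left h2' _)
      rw [EReal.coe_le_coe_iff] at h3
      have hexp : ‖t • xbar + (1 - t) • p - y‖ ^ 2 =
          ‖p - y‖ ^ 2 + 2 * (t * (inner ℝ (p - y) u : ℝ)) + t ^ 2 * ‖u‖ ^ 2 := by
        have heq : t • xbar + (1 - t) • p - y = (p - y) + t • u := by
          rw [hu]; module
        rw [heq, @norm_add_sq_real, real_inner_smul_right, norm_smul, Real.norm_eq_abs,
          mul_pow, sq_abs]
      rw [hexp] at h3
      have e1 : (‖p - y‖ ^ 2 + 2 * (t * (inner ℝ (p - y) u : ℝ)) + t ^ 2 * ‖u‖ ^ 2) / (2 * γ)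
          = ‖p - y‖ ^ 2 / (2 * γ) + t * ((inner ℝ (p - y) u : ℝ) / γ)
            + t ^ 2 * (‖u‖ ^ 2 / (2 * γ)) := by
        field_simp
      rw [e1] at h3
      have h4 : t * a ≤ t * (b + (inner ℝ (p - y) u : ℝ) / γ + t * (‖u‖ ^ 2 / (2 * γ))) := by
        nlinarith [h3]
      exact le_of_mul_le_mul_left h4 ht0
    have hsub : a ≤ b + (inner ℝ (p - y) u : ℝ) / γ := by
      have := aux_small_step_limit (a := a) (b := b) (c := (inner ℝ (p - y) u : ℝ) / γ)
        (K := ‖u‖ ^ 2 / (2 * γ)) (by positivity) hstep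
      linarith
    -- rewrite the inner product
    have hin : (inner ℝ (p - y) u : ℝ) = γ * (inner ℝ g u : ℝ) - ‖u‖ ^ 2 := by
      have heq : p - y = γ • g - u := by rw [hy, hu, hgdef]; module
      rw [heq, inner_sub_left, real_inner_smul_left, real_inner_self_eq_norm_sq]
    have hdiv : (γ * (inner ℝ g u : ℝ) - ‖u‖ ^ 2) / γ = (inner ℝ g u : ℝ) - ‖u‖ ^ 2 / γ := by
      field_simp
    rw [hin, hdiv] at hsub
    -- descent at p
    have hdesc := descent xbar p hxbar hptop
    have hflip : (inner ℝ g (p - xbar) : ℝ) = -(inner ℝ g u : ℝ) := by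
      rw [hu, ← inner_neg_right]; congr 1; abel
    have hnorm : ‖p - xbar‖ = ‖u‖ := by rw [hu, norm_sub_rev]
    rw [← hgdef, hflip, hnorm] at hdesc
    refine ⟨hptop, ?_⟩
    have hq : (1 / γ - L / 2) * ‖u‖ ^ 2 = ‖u‖ ^ 2 / γ - L / 2 * ‖u‖ ^ 2 := by ring
    show J p + a ≤ J xbar + b - (1 / γ - L / 2) * ‖u‖ ^ 2
    rw [hq]
    linarith [hdesc, hsub]
  constructor
  · intro γ hγ _
    obtain ⟨hpt, hineq⟩ := main γ hγ
    set p : X := prox γ (xbar - γ • gradient J xbar) with hp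
    rw [← EReal.coe_toReal hpt (hφ.ne_bot p), ← EReal.coe_toReal hxbar (hφ.ne_bot xbar),
      ← EReal.coe_add, ← EReal.coe_add, ← EReal.coe_sub, EReal.coe_le_coe_iff]
    have hγ0 : γ ≠ 0 := ne_of_gt hγ
    have hns : ‖γ⁻¹ • (xbar - p)‖ ^ 2 = ‖xbar - p‖ ^ 2 / γ ^ 2 := by
      rw [norm_smul, Real.norm_eq_abs, abs_inv, abs_of_pos hγ, mul_pow]
      field_simp
    have hcoef : γ * (1 - γ * L / 2) * ‖γ⁻¹ • (xbar - p)‖ ^ 2 =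
        (1 / γ - L / 2) * ‖xbar - p‖ ^ 2 := by
      rw [hns]; field_simp
    rw [hcoef]
    exact hineq
  · intro c hc0 hc1 γ hγ hγle
    obtain ⟨hpt, hineq⟩ := main γ hγ
    unfold ArmijoCond
    set p : X := prox γ (xbar - γ • gradient J xbar) with hp
    rw [← EReal.coe_toReal hpt (hφ.ne_bot p), ← EReal.coe_toReal hxbar (hφ.ne_bot xbar),
      ← EReal.coe_add, ← EReal.coe_add, ← EReal.coe_sub, EReal.coe_le_coe_iff]
    have hγ0 : γ ≠ 0 := ne_of_gt hγ
    have hns : ‖γ⁻¹ • (xbar - p)‖ ^ 2 = ‖xbar - p‖ ^ 2 / γ ^ 2 := by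
      rw [norm_smul, Real.norm_eq_abs, abs_inv, abs_of_pos hγ, mul_pow]
      field_simp
    have hkey : c * γ * ‖γ⁻¹ • (xbar - p)‖ ^ 2 ≤
        (1 / γ - L / 2) * ‖xbar - p‖ ^ 2 := by
      rw [hns]
      have h1 : c * γ * (‖xbar - p‖ ^ 2 / γ ^ 2) = (c / γ) * ‖xbar - p‖ ^ 2 := by
        field_simp
      rw [h1]
      apply mul_le_mul_of_nonneg_right _ (by positivity)
      -- c / γ ≤ 1 / γ - L / 2  ⟺  c ≤ 1 - γ L / 2  ⟸  γ ≤ 2 (1 - c) / L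
      have h2 : γ * L ≤ 2 * (1 - c) := by
        have h2' := mul_le_mul_of_nonneg_right hγle (le_of_lt hL0)
        rw [div_mul_cancel₀ _ (ne_of_gt hL0)] at h2'
        linarith
      rw [div_le_iff₀ hγ]
      have h3 : (1 / γ - L / 2) * γ = 1 - L * γ / 2 := by field_simp
      rw [h3]
      linarith
    linarith [hineq, hkey]
end
end
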